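/- Let N ≥ 1 and fix a ∈ ℂ^N. For the modified midpoint mass-preserving scheme (with Dirichlet conventions a_0 = a_{N+1} = b_0 = b_{N+1} = 0), there exists Δt₁ > 0, depending only on the ℓ² norm ‖a‖₂, such that for all 0 < Δt ≤ Δt₁ the nonlinear algebraic system b_j = a_j + Δt·( −i·((|a_j|² + |b_j|²)/2)·m_j + 2i \bar{m_j}( m_{j+1}² + m_{j−1}² ) ), m_j = (a_j + b_j)/2, j = 1,…,N, has a solution b ∈ ℂ^N, this solution is locally unique, and the map Δt ↦ b(Δt) is continuously differentiable on [0, Δt₁] with b(0) = a. -/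

import Mathlib

/-- The discrete ℓ² norm of a vector in ℂ^N (indices 1,…,N). -/
noncomputable def l2norm (N : ℕ) (c : ℕ → ℂ) : ℝ :=
  Real.sqrt (∑ j ∈ Finset.Icc 1 N, Complex.normSq (c j))

/-- The modified midpoint (mass-preserving) scheme relating `a = bₙ` to
`b = bₙ₊₁` with time step `Δt`, with `m j = (a j + b j)/2`. -/
def massScheme (N : ℕ) (Δt : ℝ) (a b : ℕ → ℂ) : Prop :=
  ∀ j ∈ Finset.Icc 1 N,
    b j = a j + (Δt : ℂ) *
      (-Complex.I * ((((Complex.normSq (a j) + Complex.normSq (b j)) / 2 : ℝ) : ℂ))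
          * ((a j + b j) / 2)
        + 2 * Complex.I * (starRingEnd ℂ) ((a j + b j) / 2)
          * (((a (j + 1) + b (j + 1)) / 2) ^ 2 + ((a (j - 1) + b (j - 1)) / 2) ^ 2))

/-!
On the interior sites the scheme is the fixed-point equation `v = A + Δt • F v`, where
`A = (a₁, …, a_N)` and `F` is a cubic polynomial map. With `ρ = ‖a‖₂ + 1`, on the closed unit
ball around `A` the map `F` is bounded by `5ρ³` and `8ρ²`-Lipschitz, so for `0 ≤ Δt ≤ 1/(16ρ³)`
the map `v ↦ A + Δt • F v` is a contraction of that ball: Banach's fixed-point theorem gives a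
solution, unique in the ball, and it lies within `5/16` of `A`. There `‖Δt • DF‖ < 1`, so the
implicit function theorem applies to `(Δt, v) ↦ v - A - Δt • F v`, and uniqueness identifies the
implicit function with the fixed point, which is therefore `C¹` in `Δt`.
-/

open Metric Set Topology Complex ComplexConjugate
open scoped NNReal

section FixedPointFamily

variable {E : Type*} [NormedAddCommGroup E] [NormedSpace ℝ E] {f : E → E} {x₀ : E}

theorem lipschitzOnWith_add_smul {s : Set E} {K : ℝ≥0} (hf : LipschitzOnWith K f s) (t : ℝ) :
    LipschitzOnWith (‖t‖₊ * K) (fun v => x₀ + t • f v) s := by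
  refine LipschitzOnWith.of_dist_le_mul fun v hv w hw => ?_
  rw [dist_add_left, dist_smul₀, NNReal.coe_mul, coe_nnnorm, mul_assoc]
  exact mul_le_mul_of_nonneg_left (hf.dist_le_mul v hv w hw) (norm_nonneg t)

theorem exists_eq_add_smul_of_lipschitzOnWith [CompleteSpace E] {r M t : ℝ} {K : ℝ≥0}
    (hM : ∀ v ∈ closedBall x₀ r, ‖f v‖ ≤ M) (hf : LipschitzOnWith K f (closedBall x₀ r))
    (hr : 0 ≤ r) (ht : 0 ≤ t) (htM : t * M ≤ r) (htK : t * K < 1) :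
    ∃ v ∈ closedBall x₀ (t * M), v = x₀ + t • f v ∧
      ∀ w ∈ closedBall x₀ r, w = x₀ + t • f w → w = v := by
  have hdist : ∀ v ∈ closedBall x₀ r, dist (x₀ + t • f v) x₀ ≤ t * M := fun v hv => by
    rw [dist_eq_norm, add_sub_cancel_left, norm_smul, Real.norm_of_nonneg ht]
    exact mul_le_mul_of_nonneg_left (hM v hv) ht
  have hmaps : MapsTo (fun v => x₀ + t • f v) (closedBall x₀ r) (closedBall x₀ r) :=
    fun v hv => (hdist v hv).trans htM
  have hK : ‖t‖₊ * K < 1 := by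
    rwa [← NNReal.coe_lt_coe, NNReal.coe_mul, coe_nnnorm, Real.norm_of_nonneg ht]
  have hcontr : ContractingWith (‖t‖₊ * K) (hmaps.restrict _ _ _) :=
    ⟨hK, hmaps.lipschitzOnWith_iff_restrict.1 (lipschitzOnWith_add_smul hf t)⟩
  obtain ⟨v, hv, hfix, -⟩ := hcontr.exists_fixedPoint' isClosed_closedBall.isComplete hmaps
    (mem_closedBall_self hr) (edist_ne_top _ _)
  refine ⟨v, hfix ▸ hdist v hv, hfix.symm, fun w hw hwfix => ?_⟩
  exact congrArg Subtype.val
    (hcontr.fixedPoint_unique' (x := ⟨w, hw⟩) (y := ⟨v, hv⟩) (Subtype.ext hwfix.symm)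
      (Subtype.ext hfix))

theorem exists_eq_add_smul_family [CompleteSpace E] {r M δ : ℝ} {K : ℝ≥0}
    (hM : ∀ v ∈ closedBall x₀ r, ‖f v‖ ≤ M) (hf : LipschitzOnWith K f (closedBall x₀ r))
    (hr : 0 ≤ r) (hδM : δ * M ≤ r) (hδK : δ * K < 1) :
    ∃ sol : ℝ → E, ∀ t ∈ Icc 0 δ, sol t ∈ closedBall x₀ (δ * M) ∧ sol t = x₀ + t • f (sol t) ∧
      ∀ w ∈ closedBall x₀ r, w = x₀ + t • f w → w = sol t := by
  have hM₀ : 0 ≤ M := (norm_nonneg _).trans (hM x₀ (mem_closedBall_self hr))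
  have h : ∀ t, ∃ v, t ∈ Icc 0 δ → v ∈ closedBall x₀ (δ * M) ∧ v = x₀ + t • f v ∧
      ∀ w ∈ closedBall x₀ r, w = x₀ + t • f w → w = v := fun t => by
    by_cases ht : t ∈ Icc 0 δ
    · have htM : t * M ≤ δ * M := mul_le_mul_of_nonneg_right ht.2 hM₀
      obtain ⟨v, hv, hfix, huniq⟩ := exists_eq_add_smul_of_lipschitzOnWith hM hf hr ht.1
        (htM.trans hδM) ((mul_le_mul_of_nonneg_right ht.2 K.2).trans_lt hδK)
      exact ⟨v, fun _ => ⟨closedBall_subset_closedBall htM hv, hfix, huniq⟩⟩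
    · exact ⟨x₀, fun h => absurd h ht⟩
  choose sol hsol using h
  exact ⟨sol, hsol⟩

theorem fderiv_comp_inr_sub_add_smul {v₀ : E} (hf : DifferentiableAt ℝ f v₀) (t₀ : ℝ) :
    fderiv ℝ (fun p : ℝ × E => p.2 - (x₀ + p.1 • f p.2)) (t₀, v₀) ∘L .inr ℝ ℝ E
      = 1 - t₀ • fderiv ℝ f v₀ := by
  have hΦ : DifferentiableAt ℝ (fun p : ℝ × E => p.2 - (x₀ + p.1 • f p.2)) (t₀, v₀) := by
    fun_prop
  have h₁ := hΦ.hasFDerivAt.comp v₀ (hasFDerivAt_prodMk_right t₀ v₀)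
  have h₂ : HasFDerivAt (fun v => v - (x₀ + t₀ • f v)) (1 - t₀ • fderiv ℝ f v₀) v₀ :=
    (hasFDerivAt_id v₀).sub ((hf.hasFDerivAt.const_smul t₀).const_add x₀)
  exact h₁.unique h₂

theorem isInvertible_one_sub [CompleteSpace E] {T : E →L[ℝ] E} (hT : ‖T‖ < 1) :
    (1 - T).IsInvertible :=
  ⟨ContinuousLinearEquiv.unitsEquiv ℝ E (Units.oneSub T hT), rfl⟩

theorem contDiffOn_of_eq_add_smul [CompleteSpace E] (hf : ContDiff ℝ 1 f) {sol : ℝ → E}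
    {I : Set ℝ} {s : Set E} {K : ℝ≥0} (hfK : LipschitzOnWith K f s) (hIK : ∀ t ∈ I, |t| * K < 1)
    (hs : ∀ t ∈ I, s ∈ 𝓝 (sol t)) (hfix : ∀ t ∈ I, sol t = x₀ + t • f (sol t))
    (huniq : ∀ t ∈ I, ∀ v ∈ s, v = x₀ + t • f v → v = sol t) :
    ContDiffOn ℝ 1 sol I := by
  intro t₀ ht₀
  set Φ : ℝ × E → E := fun p => p.2 - (x₀ + p.1 • f p.2)
  have hΦ : ContDiffAt ℝ 1 Φ (t₀, sol t₀) := by fun_prop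
  have hT : ‖t₀ • fderiv ℝ f (sol t₀)‖ < 1 := by
    rw [norm_smul, Real.norm_eq_abs]
    have hDf := (hf.differentiable one_ne_zero (sol t₀)).hasFDerivAt.le_of_lipschitzOn
      (hs t₀ ht₀) hfK
    exact (mul_le_mul_of_nonneg_left hDf (abs_nonneg t₀)).trans_lt (hIK t₀ ht₀)
  have hinv : (fderiv ℝ Φ (t₀, sol t₀) ∘L .inr ℝ ℝ E).IsInvertible := by
    rw [fderiv_comp_inr_sub_add_smul (hf.differentiable one_ne_zero _) t₀]
    exact isInvertible_one_sub hT
  set ψ := hΦ.implicitFunction one_ne_zero hinv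
  have hψ₀ : ψ t₀ = sol t₀ := hΦ.implicitFunction_apply_self one_ne_zero hinv
  have hψ : ContDiffAt ℝ 1 ψ t₀ := hΦ.contDiffAt_implicitFunction one_ne_zero hinv
  have hΦψ : ∀ᶠ t in 𝓝 t₀, Φ (t, ψ t) = 0 := by
    have hΦ₀ : Φ (t₀, sol t₀) = 0 := sub_eq_zero.2 (hfix t₀ ht₀)
    simpa only [hΦ₀] using hΦ.eventually_apply_implicitFunction one_ne_zero hinv
  have hψs : ∀ᶠ t in 𝓝 t₀, ψ t ∈ s :=
    hψ.continuousAt.preimage_mem_nhds (hψ₀ ▸ hs t₀ ht₀)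
  have hsol : sol =ᶠ[𝓝[I] t₀] ψ := by
    filter_upwards [self_mem_nhdsWithin, nhdsWithin_le_nhds (hΦψ.and hψs)] with t ht ⟨h₀, hmem⟩
    exact (huniq t ht _ hmem (sub_eq_zero.1 h₀)).symm
  exact hψ.contDiffWithinAt.congr_of_eventuallyEq hsol hψ₀.symm

theorem exists_contDiffOn_eq_add_smul [CompleteSpace E] (hf : ContDiff ℝ 1 f) {r M δ : ℝ}
    {K : ℝ≥0} (hM : ∀ v ∈ closedBall x₀ r, ‖f v‖ ≤ M) (hfK : LipschitzOnWith K f (closedBall x₀ r))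
    (hr : 0 ≤ r) (hδM : δ * M < r) (hδK : δ * K < 1) :
    ∃ sol : ℝ → E, ContDiffOn ℝ 1 sol (Icc 0 δ) ∧ ∀ t ∈ Icc 0 δ,
      sol t ∈ closedBall x₀ (δ * M) ∧ sol t = x₀ + t • f (sol t) ∧
      ∀ w ∈ closedBall x₀ r, w = x₀ + t • f w → w = sol t := by
  obtain ⟨sol, hsol⟩ := exists_eq_add_smul_family hM hfK hr hδM.le hδK
  refine ⟨sol, contDiffOn_of_eq_add_smul hf hfK (fun t ht => ?_)
    (fun t ht => closedBall_mem_nhds_of_mem ((hsol t ht).1.trans_lt hδM))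
    (fun t ht => (hsol t ht).2.1) (fun t ht => (hsol t ht).2.2), hsol⟩
  rw [abs_of_nonneg ht.1]
  exact (mul_le_mul_of_nonneg_right ht.2 K.2).trans_lt hδK

end FixedPointFamily

-- The bracket of `massScheme` at site `j`, with `a₀, a₁, a₂ = a (j - 1), a j, a (j + 1)` and
-- likewise for the `b`s.
noncomputable def massTerm (a₀ a₁ a₂ b₀ b₁ b₂ : ℂ) : ℂ :=
  -I * (((normSq a₁ + normSq b₁) / 2 : ℝ) : ℂ) * ((a₁ + b₁) / 2)
    + 2 * I * conj ((a₁ + b₁) / 2) * (((a₂ + b₂) / 2) ^ 2 + ((a₀ + b₀) / 2) ^ 2)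

theorem norm_mul_sub_mul_le {R : Type*} [NonUnitalSeminormedRing R] (x y z w : R) :
    ‖x * z - y * w‖ ≤ ‖x‖ * ‖z - w‖ + ‖x - y‖ * ‖w‖ := by
  rw [show x * z - y * w = x * (z - w) + (x - y) * w by noncomm_ring]
  exact (norm_add_le _ _).trans (add_le_add (norm_mul_le _ _) (norm_mul_le _ _))

section Bounds

variable {ρ : ℝ} {x y z : ℂ}

theorem norm_half_add_le (hx : ‖x‖ ≤ ρ) (hy : ‖y‖ ≤ ρ) : ‖(x + y) / 2‖ ≤ ρ := by
  rw [norm_div, RCLike.norm_ofNat]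
  linarith [norm_add_le x y]

theorem norm_half_add_sub_half_add (x y z : ℂ) : ‖(x + y) / 2 - (x + z) / 2‖ = ‖y - z‖ / 2 := by
  rw [← sub_div, add_sub_add_left_eq_sub, norm_div, RCLike.norm_ofNat]

theorem norm_sq_sub_sq_le (hx : ‖x‖ ≤ ρ) (hy : ‖y‖ ≤ ρ) : ‖x ^ 2 - y ^ 2‖ ≤ 2 * ρ * ‖x - y‖ := by
  rw [sq_sub_sq, norm_mul]
  gcongr
  linarith [norm_add_le x y]

theorem norm_ofReal_half_normSq_add_le (hx : ‖x‖ ≤ ρ) (hy : ‖y‖ ≤ ρ) :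
    ‖(((normSq x + normSq y) / 2 : ℝ) : ℂ)‖ ≤ ρ ^ 2 := by
  simp only [norm_real, normSq_eq_norm_sq]
  rw [Real.norm_of_nonneg (by positivity)]
  nlinarith [norm_nonneg x, norm_nonneg y]

theorem norm_ofReal_half_normSq_add_sub_le (hy : ‖y‖ ≤ ρ) (hz : ‖z‖ ≤ ρ) :
    ‖(((normSq x + normSq y) / 2 : ℝ) : ℂ) - (((normSq x + normSq z) / 2 : ℝ) : ℂ)‖
      ≤ ρ * ‖y - z‖ := by
  simp only [← ofReal_sub, norm_real, Real.norm_eq_abs, normSq_eq_norm_sq]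
  have hρ : 0 ≤ ρ := (norm_nonneg y).trans hy
  calc |(‖x‖ ^ 2 + ‖y‖ ^ 2) / 2 - (‖x‖ ^ 2 + ‖z‖ ^ 2) / 2|
      = (‖y‖ + ‖z‖) * |‖y‖ - ‖z‖| / 2 := by
        rw [show (‖x‖ ^ 2 + ‖y‖ ^ 2) / 2 - (‖x‖ ^ 2 + ‖z‖ ^ 2) / 2
            = (‖y‖ + ‖z‖) * (‖y‖ - ‖z‖) / 2 by ring, abs_div, abs_mul, abs_two,
          abs_of_nonneg (by positivity : 0 ≤ ‖y‖ + ‖z‖)]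
    _ ≤ (ρ + ρ) * ‖y - z‖ / 2 := by gcongr; exact abs_norm_sub_norm_le y z
    _ = ρ * ‖y - z‖ := by ring

theorem norm_massTerm_le {a₀ a₁ a₂ b₀ b₁ b₂ : ℂ} (ha₀ : ‖a₀‖ ≤ ρ) (ha₁ : ‖a₁‖ ≤ ρ)
    (ha₂ : ‖a₂‖ ≤ ρ) (hb₀ : ‖b₀‖ ≤ ρ) (hb₁ : ‖b₁‖ ≤ ρ) (hb₂ : ‖b₂‖ ≤ ρ) :
    ‖massTerm a₀ a₁ a₂ b₀ b₁ b₂‖ ≤ 5 * ρ ^ 3 := by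
  have hρ : 0 ≤ ρ := (norm_nonneg _).trans ha₀
  have hX := norm_ofReal_half_normSq_add_le ha₁ hb₁
  have hm₀ := norm_half_add_le ha₀ hb₀
  have hm₁ := norm_half_add_le ha₁ hb₁
  have hm₂ := norm_half_add_le ha₂ hb₂
  calc ‖massTerm a₀ a₁ a₂ b₀ b₁ b₂‖
      ≤ ‖(((normSq a₁ + normSq b₁) / 2 : ℝ) : ℂ)‖ * ‖(a₁ + b₁) / 2‖
        + 2 * ‖(a₁ + b₁) / 2‖ * (‖(a₂ + b₂) / 2‖ ^ 2 + ‖(a₀ + b₀) / 2‖ ^ 2) := by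
        refine (norm_add_le _ _).trans ?_
        simp only [norm_mul, norm_neg, norm_I, one_mul, RCLike.norm_ofNat, mul_one, norm_conj]
        gcongr
        exact (norm_add_le _ _).trans_eq (by rw [norm_pow, norm_pow])
    _ ≤ ρ ^ 2 * ρ + 2 * ρ * (ρ ^ 2 + ρ ^ 2) := by gcongr
    _ = 5 * ρ ^ 3 := by ring

theorem norm_massTerm_sub_le {e : ℝ} {a₀ a₁ a₂ p₀ p₁ p₂ q₀ q₁ q₂ : ℂ} (ha₀ : ‖a₀‖ ≤ ρ)
    (ha₁ : ‖a₁‖ ≤ ρ) (ha₂ : ‖a₂‖ ≤ ρ) (hp₀ : ‖p₀‖ ≤ ρ) (hp₁ : ‖p₁‖ ≤ ρ) (hp₂ : ‖p₂‖ ≤ ρ)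
    (hq₀ : ‖q₀‖ ≤ ρ) (hq₁ : ‖q₁‖ ≤ ρ) (hq₂ : ‖q₂‖ ≤ ρ)
    (hd₀ : ‖p₀ - q₀‖ ≤ e) (hd₁ : ‖p₁ - q₁‖ ≤ e) (hd₂ : ‖p₂ - q₂‖ ≤ e) :
    ‖massTerm a₀ a₁ a₂ p₀ p₁ p₂ - massTerm a₀ a₁ a₂ q₀ q₁ q₂‖ ≤ 8 * ρ ^ 2 * e := by
  have hρ : 0 ≤ ρ := (norm_nonneg _).trans ha₀
  have he : 0 ≤ e := (norm_nonneg _).trans hd₀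
  have hdm : ∀ {a p q : ℂ}, ‖p - q‖ ≤ e → ‖(a + p) / 2 - (a + q) / 2‖ ≤ e / 2 := fun h => by
    rw [norm_half_add_sub_half_add]; linarith
  set X : ℂ := (((normSq a₁ + normSq p₁) / 2 : ℝ) : ℂ)
  set Y : ℂ := (((normSq a₁ + normSq q₁) / 2 : ℝ) : ℂ)
  set S := ((a₂ + p₂) / 2) ^ 2 + ((a₀ + p₀) / 2) ^ 2
  set T := ((a₂ + q₂) / 2) ^ 2 + ((a₀ + q₀) / 2) ^ 2
  have hsplit : massTerm a₀ a₁ a₂ p₀ p₁ p₂ - massTerm a₀ a₁ a₂ q₀ q₁ q₂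
      = -I * (X * ((a₁ + p₁) / 2) - Y * ((a₁ + q₁) / 2))
        + 2 * I * (conj ((a₁ + p₁) / 2) * S - conj ((a₁ + q₁) / 2) * T) := by
    unfold massTerm; ring
  have hST : ‖S - T‖ ≤ 2 * ρ * e := by
    have h₂ := norm_sq_sub_sq_le (norm_half_add_le ha₂ hp₂) (norm_half_add_le ha₂ hq₂)
    have h₀ := norm_sq_sub_sq_le (norm_half_add_le ha₀ hp₀) (norm_half_add_le ha₀ hq₀)
    calc ‖S - T‖
        = ‖(((a₂ + p₂) / 2) ^ 2 - ((a₂ + q₂) / 2) ^ 2)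
            + (((a₀ + p₀) / 2) ^ 2 - ((a₀ + q₀) / 2) ^ 2)‖ := by congr 1; ring
      _ ≤ 2 * ρ * (e / 2) + 2 * ρ * (e / 2) := (norm_add_le _ _).trans
          (add_le_add (h₂.trans (by gcongr; exact hdm hd₂)) (h₀.trans (by gcongr; exact hdm hd₀)))
      _ = 2 * ρ * e := by ring
  have hT : ‖T‖ ≤ 2 * ρ ^ 2 := by
    calc ‖T‖ ≤ ‖(a₂ + q₂) / 2‖ ^ 2 + ‖(a₀ + q₀) / 2‖ ^ 2 :=
          (norm_add_le _ _).trans_eq (by rw [norm_pow, norm_pow])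
      _ ≤ ρ ^ 2 + ρ ^ 2 := by gcongr <;> exact norm_half_add_le ‹_› ‹_›
      _ = 2 * ρ ^ 2 := by ring
  have h₁ : ‖X * ((a₁ + p₁) / 2) - Y * ((a₁ + q₁) / 2)‖ ≤ ρ ^ 2 * (e / 2) + ρ * e * ρ :=
    (norm_mul_sub_mul_le _ _ _ _).trans (add_le_add
      (mul_le_mul (norm_ofReal_half_normSq_add_le ha₁ hp₁) (hdm hd₁) (norm_nonneg _)
        (by positivity))
      (mul_le_mul ((norm_ofReal_half_normSq_add_sub_le hp₁ hq₁).trans (by gcongr))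
        (norm_half_add_le ha₁ hq₁) (norm_nonneg _) (by positivity)))
  have h₂ : ‖conj ((a₁ + p₁) / 2) * S - conj ((a₁ + q₁) / 2) * T‖
      ≤ ρ * (2 * ρ * e) + e / 2 * (2 * ρ ^ 2) := by
    refine (norm_mul_sub_mul_le _ _ _ _).trans (add_le_add ?_ ?_)
    · rw [norm_conj]
      exact mul_le_mul (norm_half_add_le ha₁ hp₁) hST (norm_nonneg _) hρ
    · rw [← map_sub, norm_conj]
      exact mul_le_mul (hdm hd₁) hT (norm_nonneg _) (by positivity)
  rw [hsplit]
  refine (norm_add_le _ _).trans ?_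
  simp only [norm_mul, norm_neg, norm_I, one_mul, RCLike.norm_ofNat, mul_one]
  nlinarith [mul_nonneg (sq_nonneg ρ) he]

end Bounds

-- Coordinate `i : Fin N` sits at site `i + 1` of the chain; every other site carries `0`.
def dirichletExt (N : ℕ) (v : Fin N → ℂ) : ℕ → ℂ :=
  fun j => if h : 1 ≤ j ∧ j ≤ N then v ⟨j - 1, by omega⟩ else 0

def interiorPart (N : ℕ) (c : ℕ → ℂ) : Fin N → ℂ :=
  fun i => c (i + 1)

noncomputable def massMap (N : ℕ) (a : ℕ → ℂ) (v : Fin N → ℂ) : Fin N → ℂ :=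
  fun i => massTerm (a i) (a (i + 1)) (a (i + 2))
    (dirichletExt N v i) (dirichletExt N v (i + 1)) (dirichletExt N v (i + 2))

section DirichletExt

variable {N : ℕ}

theorem forall_mem_Icc_one_iff_forall_fin {P : ℕ → Prop} :
    (∀ j ∈ Finset.Icc 1 N, P j) ↔ ∀ i : Fin N, P (i + 1) := by
  refine ⟨fun h i => h _ (Finset.mem_Icc.2 ⟨by omega, i.2⟩), fun h j hj => ?_⟩
  obtain ⟨hj₁, hjN⟩ := Finset.mem_Icc.1 hj
  simpa [Nat.sub_add_cancel hj₁] using h ⟨j - 1, by omega⟩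

theorem interiorPart_dirichletExt (v : Fin N → ℂ) : interiorPart N (dirichletExt N v) = v := by
  funext i
  simp [interiorPart, dirichletExt, Nat.succ_le_of_lt i.2]

theorem dirichletExt_interiorPart {c : ℕ → ℂ} (h₀ : c 0 = 0) (hN : c (N + 1) = 0) {k : ℕ}
    (hk : k ≤ N + 1) : dirichletExt N (interiorPart N c) k = c k := by
  unfold dirichletExt interiorPart
  split_ifs with h
  · exact congrArg c (Nat.sub_add_cancel h.1)
  · obtain rfl | rfl : k = 0 ∨ k = N + 1 := by omega
    exacts [h₀.symm, hN.symm]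

theorem dirichletExt_sub (v w : Fin N → ℂ) (k : ℕ) :
    dirichletExt N (v - w) k = dirichletExt N v k - dirichletExt N w k := by
  unfold dirichletExt
  split_ifs <;> simp

theorem norm_dirichletExt_le (v : Fin N → ℂ) (k : ℕ) : ‖dirichletExt N v k‖ ≤ ‖v‖ := by
  unfold dirichletExt
  split_ifs
  · exact norm_le_pi_norm v _
  · simp

theorem contDiff_dirichletExt_apply (k : ℕ) :
    ContDiff ℝ 1 (fun v : Fin N → ℂ => dirichletExt N v k) := by
  unfold dirichletExt
  split_ifs
  · exact contDiff_apply ℝ ℂ _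
  · exact contDiff_const

theorem l2norm_nonneg (c : ℕ → ℂ) : 0 ≤ l2norm N c :=
  Real.sqrt_nonneg _

theorem norm_le_l2norm (c : ℕ → ℂ) {k : ℕ} (hk : k ∈ Finset.Icc 1 N) : ‖c k‖ ≤ l2norm N c := by
  rw [l2norm, norm_def]
  exact Real.sqrt_le_sqrt (Finset.single_le_sum (fun j _ => normSq_nonneg (c j)) hk)

theorem norm_interiorPart_le_l2norm (c : ℕ → ℂ) : ‖interiorPart N c‖ ≤ l2norm N c :=
  pi_norm_le_iff_of_nonneg (l2norm_nonneg c) |>.2 fun i =>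
    norm_le_l2norm c (Finset.mem_Icc.2 ⟨by omega, i.2⟩)

theorem dist_interiorPart_le_l2norm (c d : ℕ → ℂ) :
    dist (interiorPart N c) (interiorPart N d) ≤ l2norm N (c - d) :=
  (dist_eq_norm _ _).trans_le (norm_interiorPart_le_l2norm (c - d))

theorem closedBall_interiorPart_subset (c : ℕ → ℂ) :
    closedBall (interiorPart N c) 1 ⊆ closedBall 0 (l2norm N c + 1) :=
  closedBall_subset_closedBall' <| by
    rw [dist_zero_right]
    linarith [norm_interiorPart_le_l2norm (N := N) c]

theorem norm_le_l2norm_of_le_succ {c : ℕ → ℂ} (h₀ : c 0 = 0) (hN : c (N + 1) = 0) {k : ℕ}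
    (hk : k ≤ N + 1) : ‖c k‖ ≤ l2norm N c :=
  dirichletExt_interiorPart h₀ hN hk ▸
    (norm_dirichletExt_le _ k).trans (norm_interiorPart_le_l2norm c)

theorem interiorPart_add_dirichletExt (c : ℕ → ℂ) (v : Fin N → ℂ) :
    interiorPart N (c + dirichletExt N v) = interiorPart N c + v := by
  show interiorPart N c + interiorPart N (dirichletExt N v) = _
  rw [interiorPart_dirichletExt]

theorem eq_of_interiorPart_eq {c d : ℕ → ℂ} (h : interiorPart N c = interiorPart N d) :
    ∀ j ∈ Finset.Icc 1 N, c j = d j :=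
  forall_mem_Icc_one_iff_forall_fin.2 (congrFun h)

end DirichletExt

section MassMap

variable {N : ℕ} {a : ℕ → ℂ} {ρ : ℝ}

theorem massScheme_iff {dt : ℝ} {c : ℕ → ℂ} (h₀ : c 0 = 0) (hN : c (N + 1) = 0) :
    massScheme N dt a c ↔
      interiorPart N c = interiorPart N a + dt • massMap N a (interiorPart N c) := by
  rw [massScheme, forall_mem_Icc_one_iff_forall_fin, funext_iff]
  refine forall_congr' fun i => ?_
  rw [Pi.add_apply, Pi.smul_apply, massMap, real_smul,
    dirichletExt_interiorPart h₀ hN (k := i) (by omega),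
    dirichletExt_interiorPart h₀ hN (k := i + 1) (by omega),
    dirichletExt_interiorPart h₀ hN (k := i + 2) (by omega)]
  simp only [interiorPart, massTerm, Nat.add_sub_cancel]

theorem norm_massMap_le (ha : ∀ k ≤ N + 1, ‖a k‖ ≤ ρ) {v : Fin N → ℂ} (hv : ‖v‖ ≤ ρ) :
    ‖massMap N a v‖ ≤ 5 * ρ ^ 3 := by
  have hρ : 0 ≤ ρ := (norm_nonneg v).trans hv
  have hv' : ∀ k, ‖dirichletExt N v k‖ ≤ ρ := fun k => (norm_dirichletExt_le v k).trans hv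
  exact (pi_norm_le_iff_of_nonneg (by positivity)).2 fun i =>
    norm_massTerm_le (ha _ (by omega)) (ha _ (by omega)) (ha _ (by omega)) (hv' _) (hv' _) (hv' _)

theorem lipschitzOnWith_massMap (ha : ∀ k ≤ N + 1, ‖a k‖ ≤ ρ) :
    LipschitzOnWith (8 * ρ ^ 2).toNNReal (massMap N a) (closedBall 0 ρ) := by
  refine LipschitzOnWith.of_dist_le_mul fun v hv w hw => ?_
  rw [mem_closedBall_zero_iff] at hv hw
  have hv' : ∀ k, ‖dirichletExt N v k‖ ≤ ρ := fun k => (norm_dirichletExt_le v k).trans hv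
  have hw' : ∀ k, ‖dirichletExt N w k‖ ≤ ρ := fun k => (norm_dirichletExt_le w k).trans hw
  have hvw : ∀ k, ‖dirichletExt N v k - dirichletExt N w k‖ ≤ ‖v - w‖ := fun k =>
    dirichletExt_sub v w k ▸ norm_dirichletExt_le (v - w) k
  rw [dist_eq_norm, dist_eq_norm, Real.coe_toNNReal _ (by positivity)]
  exact (pi_norm_le_iff_of_nonneg (by positivity)).2 fun i =>
    norm_massTerm_sub_le (ha _ (by omega)) (ha _ (by omega)) (ha _ (by omega))
      (hv' _) (hv' _) (hv' _) (hw' _) (hw' _) (hw' _) (hvw _) (hvw _) (hvw _)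

theorem contDiff_massMap : ContDiff ℝ 1 (massMap N a) := by
  have hconj : ContDiff ℝ 1 fun z : ℂ => conj z := conjCLE.contDiff
  have hext := contDiff_dirichletExt_apply (N := N)
  refine contDiff_pi.2 fun i => ?_
  simp only [massMap, massTerm, ofReal_div, ofReal_add, ofReal_ofNat, ← mul_conj]
  fun_prop

theorem exists_contDiffOn_eq_add_smul_massMap (ha₀ : a 0 = 0) (haN : a (N + 1) = 0) :
    ∃ sol : ℝ → Fin N → ℂ, ContDiffOn ℝ 1 sol (Icc 0 (1 / (16 * (l2norm N a + 1) ^ 3))) ∧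
      ∀ t ∈ Icc 0 (1 / (16 * (l2norm N a + 1) ^ 3)),
        sol t ∈ closedBall (interiorPart N a) (5 / 16) ∧
        sol t = interiorPart N a + t • massMap N a (sol t) ∧
        ∀ w ∈ closedBall (interiorPart N a) 1,
          w = interiorPart N a + t • massMap N a w → w = sol t := by
  set ρ := l2norm N a + 1
  have hρ : 1 ≤ ρ := by linarith [l2norm_nonneg (N := N) a]
  have ha : ∀ k ≤ N + 1, ‖a k‖ ≤ ρ := fun k hk =>
    (norm_le_l2norm_of_le_succ ha₀ haN hk).trans (by linarith)
  have hM : ∀ v ∈ closedBall (interiorPart N a) 1, ‖massMap N a v‖ ≤ 5 * ρ ^ 3 := fun v hv =>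
    norm_massMap_le ha (mem_closedBall_zero_iff.1 (closedBall_interiorPart_subset a hv))
  have hδM : 1 / (16 * ρ ^ 3) * (5 * ρ ^ 3) = 5 / 16 := by field_simp
  have hδK : 1 / (16 * ρ ^ 3) * (8 * ρ ^ 2).toNNReal < 1 := by
    rw [Real.coe_toNNReal _ (by positivity), div_mul_eq_mul_div, one_mul,
      div_lt_one (by positivity)]
    nlinarith [pow_pos (zero_lt_one.trans_le hρ) 2]
  simpa only [hδM] using exists_contDiffOn_eq_add_smul contDiff_massMap hM
    ((lipschitzOnWith_massMap ha).mono (closedBall_interiorPart_subset a)) zero_le_one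
    (by rw [hδM]; norm_num) hδK

end MassMap

theorem mass_scheme_solvability (N : ℕ) :
    ∃ δ : ℝ → ℝ, (∀ r : ℝ, 0 < δ r) ∧
      ∀ a : ℕ → ℂ, a 0 = 0 → a (N + 1) = 0 →
        ∃ B : ℝ → ℕ → ℂ,
          (∀ dt : ℝ, B dt 0 = 0 ∧ B dt (N + 1) = 0) ∧
          (∀ j, B 0 j = a j) ∧
          (∀ j ∈ Finset.Icc 1 N,
            ContDiffOn ℝ 1 (fun dt : ℝ => B dt j) (Set.Icc 0 (δ (l2norm N a)))) ∧
          (∀ dt ∈ Set.Icc (0 : ℝ) (δ (l2norm N a)), massScheme N dt a (B dt)) ∧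
          (∀ dt ∈ Set.Icc (0 : ℝ) (δ (l2norm N a)), ∃ ε > (0 : ℝ), ∀ b' : ℕ → ℂ,
            b' 0 = 0 → b' (N + 1) = 0 → massScheme N dt a b' →
            l2norm N (b' - B dt) < ε → ∀ j ∈ Finset.Icc 1 N, b' j = B dt j) := by
  refine ⟨fun r => 1 / (16 * (|r| + 1) ^ 3), fun r => by positivity, fun a ha₀ haN => ?_⟩
  have hl := l2norm_nonneg (N := N) a
  simp only [abs_of_nonneg hl]
  obtain ⟨sol, hsolC1, hsol⟩ := exists_contDiffOn_eq_add_smul_massMap ha₀ haN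
  set A := interiorPart N a
  -- Off the chain `B dt` agrees with `a`, so that `B 0 = a` holds at every index.
  set B : ℝ → ℕ → ℂ := fun dt => a + dirichletExt N (sol dt - A)
  have hB : ∀ dt, B dt 0 = 0 ∧ B dt (N + 1) = 0 := fun dt => by simp [B, dirichletExt, ha₀, haN]
  have hBint : ∀ dt, interiorPart N (B dt) = sol dt := fun dt => by
    rw [interiorPart_add_dirichletExt, add_sub_cancel]
  have hsol₀ : sol 0 = A :=
    ((hsol 0 ⟨le_rfl, by positivity⟩).2.2 A (mem_closedBall_self zero_le_one) (by simp)).symm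
  refine ⟨B, hB, fun j => by simp [B, hsol₀, dirichletExt], fun j _ => ?_, fun dt hdt => ?_,
    fun dt hdt => ⟨11 / 16, by norm_num, fun b' hb'₀ hb'N hb' hdist => ?_⟩⟩
  · exact contDiffOn_const.add
      ((contDiff_dirichletExt_apply j).comp_contDiffOn (hsolC1.sub contDiffOn_const))
  · rw [massScheme_iff (hB dt).1 (hB dt).2, hBint]
    exact (hsol dt hdt).2.1
  · have hb'sol := hBint dt ▸ dist_interiorPart_le_l2norm b' (B dt)
    have hb'A : interiorPart N b' ∈ closedBall A 1 := mem_closedBall.2 <|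
      (dist_triangle _ (sol dt) _).trans (by linarith [mem_closedBall.1 (hsol dt hdt).1])
    exact eq_of_interiorPart_eq <| (hBint dt).symm ▸
      (hsol dt hdt).2.2 _ hb'A ((massScheme_iff hb'₀ hb'N).1 hb')
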